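/- arXiv:1809.09443 — 2 statements merged into one kernel-verified Lean document; each statement's English description precedes it below -/
import Mathlib

section
/- Let X be an integer-valued random variable with P(X = k) = (1/π₀)/(1+k²) for k ∈ ℤ, where π₀ = π·cosh(π)/sinh(π). Then for all t with -2π ≤ t ≤ 2π, the characteristic function of X satisfies E[e^{itX}] = cosh(π - |t|)/cosh(π). -/
/-!
On `[0, 2π]` the function `x ↦ cosh (π - x)` takes the same value at both endpoints, so it descends
to a continuous function on the circle `ℝ / 2πℤ`. An explicit antiderivative shows that its
Fourier coefficients are `sinh π / (π (1 + n²))`, which are summable, so its Fourier series converges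
to it pointwise. At the point `t` this series is `cosh π · ∑ f(k) e^{itk} = cosh π · 𝔼[e^{itX}]`,
while the function itself equals `cosh (π - |t|)` for `|t| ≤ 2π`.
-/

open Real MeasureTheory

lemma hasDerivAt_cosh_pi_sub_antideriv (n : ℤ) (z : ℂ) :
    HasDerivAt (fun z : ℂ => Complex.exp (-(n * z * Complex.I)) *
        (n * Complex.I * Complex.cosh (π - z) - Complex.sinh (π - z)))
      (Complex.exp (-(n * z * Complex.I)) * Complex.cosh (π - z) * (1 + n ^ 2)) z := by
  have hlin : HasDerivAt (fun z : ℂ => π - z) (-1) z := by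
    simpa using (hasDerivAt_id z).const_sub (π : ℂ)
  have hexp : HasDerivAt (fun z : ℂ => -(n * z * Complex.I)) (-(n * Complex.I)) z := by
    simpa using (((hasDerivAt_id z).const_mul (n : ℂ)).mul_const Complex.I).fun_neg
  refine (hexp.cexp.fun_mul
    ((hlin.ccosh.const_mul (n * Complex.I)).fun_sub hlin.csinh)).congr_deriv ?_
  linear_combination
    -(Complex.exp (-(n * z * Complex.I)) * (n : ℂ) ^ 2 * Complex.cosh (π - z)) * Complex.I_sq

lemma integral_exp_mul_cosh_pi_sub (n : ℤ) :
    ∫ x in (0 : ℝ)..2 * π, Complex.exp (-(n * x * Complex.I)) * Complex.cosh (π - x) =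
      2 * Real.sinh π / (1 + n ^ 2) := by
  have hn : (1 + n ^ 2 : ℂ) ≠ 0 := by exact_mod_cast (by positivity : (1 + (n : ℝ) ^ 2) ≠ 0)
  have hF := fun x (_ : x ∈ Set.uIcc 0 (2 * π)) =>
    ((hasDerivAt_cosh_pi_sub_antideriv n x).comp_ofReal).div_const (1 + n ^ 2)
  simp only [mul_div_assoc, div_self hn, mul_one] at hF
  rw [intervalIntegral.integral_eq_sub_of_hasDerivAt hF
    (by apply Continuous.intervalIntegrable; fun_prop)]
  have hper : Complex.exp (-(n * (2 * π : ℝ) * Complex.I)) = 1 := by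
    rw [← Complex.exp_int_mul_two_pi_mul_I (-n)]; push_cast; ring_nf
  rw [hper, show ((π : ℂ) - (2 * π : ℝ)) = -π by push_cast; ring, Complex.cosh_neg,
    Complex.sinh_neg]
  simp only [Complex.ofReal_zero, mul_zero, zero_mul, neg_zero, Complex.exp_zero, sub_zero]
  push_cast
  field_simp
  ring

instance : Fact ((0 : ℝ) < 2 * π) := ⟨two_pi_pos⟩

noncomputable def periodicCoshPiSub : C(AddCircle (2 * π), ℂ) :=
  ⟨AddCircle.liftIco (2 * π) 0 fun x => Complex.cosh (π - x),
    AddCircle.liftIco_zero_continuous (by push_cast; rw [sub_zero, ← Complex.cosh_neg]; ring_nf)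
      (by fun_prop)⟩

lemma coe_periodicCoshPiSub :
    ⇑periodicCoshPiSub = AddCircle.liftIco (2 * π) 0 fun x => Complex.cosh (π - x) := rfl

lemma periodicCoshPiSub_coe_of_mem_Icc {x : ℝ} (hx : x ∈ Set.Icc 0 (2 * π)) :
    periodicCoshPiSub x = Complex.cosh (π - x) := by
  rw [coe_periodicCoshPiSub]
  rcases hx.2.lt_or_eq with hlt | rfl
  · exact AddCircle.liftIco_zero_coe_apply ⟨hx.1, hlt⟩
  · rw [AddCircle.coe_period, ← QuotientAddGroup.mk_zero,
      AddCircle.liftIco_zero_coe_apply ⟨le_rfl, two_pi_pos⟩]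
    push_cast
    rw [sub_zero, ← Complex.cosh_neg]
    ring_nf

lemma fourierCoeff_periodicCoshPiSub (n : ℤ) :
    fourierCoeff periodicCoshPiSub n = ((sinh π / (π * (1 + n ^ 2)) : ℝ) : ℂ) := by
  rw [coe_periodicCoshPiSub, fourierCoeff_liftIco_eq, fourierCoeffOn_eq_integral]
  have hintegrand : Set.EqOn (fun x : ℝ => fourier (-n) (x : AddCircle (0 + 2 * π - 0)) •
      Complex.cosh (π - x)) (fun x => Complex.exp (-(n * x * Complex.I)) * Complex.cosh (π - x))
      (Set.uIcc 0 (0 + 2 * π)) := fun x _ => by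
    dsimp only
    rw [fourier_coe_apply, smul_eq_mul]
    congr 2
    push_cast
    field_simp
    ring
  rw [intervalIntegral.integral_congr hintegrand, zero_add, integral_exp_mul_cosh_pi_sub, sub_zero,
    Complex.real_smul]
  push_cast
  field_simp

lemma summable_one_div_one_add_sq : Summable fun n : ℤ => 1 / (1 + (n : ℝ) ^ 2) := by
  refine (Real.summable_one_div_int_pow.mpr one_lt_two).of_norm_bounded_eventually ?_
  filter_upwards [Filter.eventually_cofinite_ne 0] with n hn
  rw [Real.norm_of_nonneg (by positivity)]
  have : (0 : ℝ) < (n : ℝ) ^ 2 := by positivity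
  exact one_div_le_one_div_of_le this (by linarith)

lemma summable_fourierCoeff_periodicCoshPiSub : Summable (fourierCoeff periodicCoshPiSub) := by
  rw [funext fourierCoeff_periodicCoshPiSub, Complex.summable_ofReal]
  refine (summable_one_div_one_add_sq.mul_left (sinh π / π)).congr fun n => ?_
  field_simp

lemma periodicCoshPiSub_coe_of_abs_le {t : ℝ} (ht : |t| ≤ 2 * π) :
    periodicCoshPiSub t = Real.cosh (π - |t|) := by
  rcases le_or_gt 0 t with h | h
  · rw [abs_of_nonneg h, periodicCoshPiSub_coe_of_mem_Icc ⟨h, by rwa [abs_of_nonneg h] at ht⟩]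
    push_cast
    rfl
  · rw [abs_of_neg h] at ht ⊢
    rw [← AddCircle.coe_add_period, periodicCoshPiSub_coe_of_mem_Icc ⟨by linarith, by linarith⟩,
      ← Complex.cosh_neg]
    push_cast
    ring_nf

lemma hasSum_cosh_pi_sub_abs {t : ℝ} (ht : |t| ≤ 2 * π) :
    HasSum (fun n : ℤ => ((sinh π / (π * (1 + n ^ 2)) : ℝ) : ℂ) * Complex.exp (t * n * Complex.I))
      (Real.cosh (π - |t|) : ℂ) := by
  have H := has_pointwise_sum_fourier_series_of_summable
    summable_fourierCoeff_periodicCoshPiSub (t : AddCircle (2 * π))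
  rw [periodicCoshPiSub_coe_of_abs_le ht] at H
  convert H using 2 with n
  rw [fourierCoeff_periodicCoshPiSub, fourier_coe_apply, smul_eq_mul]
  congr 2
  push_cast
  field_simp

lemma integral_comp_eq_tsum_measureReal {Ω α E : Type*} [MeasurableSpace Ω] [MeasurableSpace α]
    [DiscreteMeasurableSpace α] [Countable α] [NormedAddCommGroup E] [NormedSpace ℝ E]
    [CompleteSpace E] {μ : Measure Ω} [IsFiniteMeasure μ] {X : Ω → α} (hX : Measurable X)
    {g : α → E} {C : ℝ} (hg : ∀ a, ‖g a‖ ≤ C) :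
    ∫ ω, g (X ω) ∂μ = ∑' a, μ.real (X ⁻¹' {a}) • g a := by
  have hgm : AEStronglyMeasurable g (μ.map X) := StronglyMeasurable.of_discrete.aestronglyMeasurable
  rw [← integral_map hX.aemeasurable hgm,
    integral_countable (Integrable.of_bound hgm C (Filter.Eventually.of_forall hg))]
  simp only [map_measureReal_apply hX (measurableSet_singleton _)]

theorem stmt_4 {Ω : Type*} [MeasurableSpace Ω] (μ : Measure Ω) [IsProbabilityMeasure μ]
    (X : Ω → ℤ) (hX : Measurable X)
    (hpmf : ∀ k : ℤ, (μ {ω | X ω = k}).toReal =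
      (1 / (π * Real.cosh π / Real.sinh π)) * (1 / (1 + (k : ℝ) ^ 2)))
    (t : ℝ) (ht : -(2 * π) ≤ t ∧ t ≤ 2 * π) :
    ∫ ω, Complex.exp (t * (X ω : ℝ) * Complex.I) ∂μ =
      ((Real.cosh (π - |t|) / Real.cosh π : ℝ) : ℂ) := by
  have hbound (k : ℤ) : ‖Complex.exp (t * (k : ℝ) * Complex.I)‖ ≤ 1 := by
    rw [← Complex.ofReal_mul, Complex.norm_exp_ofReal_mul_I]
  have hsum := (hasSum_cosh_pi_sub_abs (abs_le.mpr ht)).div_const (Real.cosh π : ℂ)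
  rw [integral_comp_eq_tsum_measureReal hX hbound, Complex.ofReal_div, ← hsum.tsum_eq]
  congr 1 with k
  rw [measureReal_def, show X ⁻¹' {k} = {ω | X ω = k} from rfl, hpmf k, one_div_div,
    Complex.real_smul]
  push_cast
  field_simp
end

section
/- Let λ₁, λ₂ > 0 and let X, Y be independent with pmfs f_{λ₁}, f_{λ₂} from the Cauchy-Cacoullos family f_λ(k) = (tanh(λπ)/π)·λ/(λ²+k²). Then, with α(λ) = cosh(λπ), for every k ∈ ℤ: P(X+Y = k) = [α(λ₁+λ₂)/(2α(λ₁)α(λ₂))]·f_{λ₁+λ₂}(k) + [α(|λ₂-λ₁|)/(2α(λ₁)α(λ₂))]·f_{|λ₂-λ₁|}(k), where f₀(k) = 1 if k = 0 and 0 otherwise. -/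
open Real MeasureTheory

/-- The Cauchy-Cacoullos pmf, extended to `λ = 0` by the point mass at `0`. -/
noncomputable def ccPmf (l : ℝ) (k : ℤ) : ℝ :=
  if l = 0 then (if k = 0 then 1 else 0)
  else (Real.tanh (l * π) / π) * (l / (l ^ 2 + (k : ℝ) ^ 2))

/-!
For every real `l`, `cosh (l π) • ccPmf l` is the sequence of Fourier coefficients of the
`2π`-periodic function equal to `cosh (l (π - t))` on `[0, 2π]` (for `l = 0`: the constant `1` and
the point mass at `0`). The law of `X + Y` is the convolution of the two pmfs, and the Fourier
coefficients of a product are the convolution of the coefficients as soon as one of the two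
sequences is summable. So the claim is `2 cosh a cosh b = cosh (a + b) + cosh (a - b)` read on
the Fourier side.
-/

section FourierConvolution

open AddCircle

variable {T : ℝ} [Fact (0 < T)]

theorem ContinuousMap.integrable_haarAddCircle {E : Type*} [NormedAddCommGroup E]
    (f : C(AddCircle T, E)) : Integrable f haarAddCircle :=
  f.continuous.integrable_of_hasCompactSupport (.of_compactSpace _)

theorem hasSum_fourierCoeff_mul_fourierCoeff (f g : C(AddCircle T, ℂ))
    (hf : Summable (fourierCoeff f)) (k : ℤ) :
    HasSum (fun j ↦ fourierCoeff f j * fourierCoeff g (k - j)) (fourierCoeff (⇑(f * g)) k) := by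
  have hterm (j : ℤ) : fourierCoeff f j * fourierCoeff g (k - j) =
      ∫ x, fourierCoeff f j • fourier j x * (fourier (-k) x * g x) ∂haarAddCircle := by
    simp only [smul_eq_mul, mul_assoc, integral_const_mul, fourierCoeff]
    congr 2 with x
    rw [show -(k - j) = j + -k by ring, fourier_add]
    ring
  have hprod : fourierCoeff (⇑(f * g)) k = ∫ x, f x * (fourier (-k) x * g x) ∂haarAddCircle := by
    simp only [fourierCoeff, ContinuousMap.mul_apply, smul_eq_mul]
    congr 1 with x
    ring
  simp_rw [hterm, hprod]
  refine hasSum_integral_of_dominated_convergence (fun j _ ↦ ‖fourierCoeff f j‖ * ‖g‖)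
    (fun j ↦ by fun_prop) (fun j ↦ .of_forall fun x ↦ ?_) (.of_forall fun _ ↦ hf.norm.mul_right _)
    (integrable_const _) (.of_forall fun x ↦
      (has_pointwise_sum_fourier_series_of_summable hf x).mul_right _)
  have hfourier (n : ℤ) : ‖fourier n x‖ = 1 := Circle.norm_coe _
  simp only [smul_eq_mul, norm_mul, hfourier, mul_one, one_mul]
  exact mul_le_mul_of_nonneg_left (g.norm_coe_le_norm x) (norm_nonneg _)

end FourierConvolution

theorem ProbabilityTheory.IndepFun.toReal_measure_add_eq_tsum {Ω G : Type*} [MeasurableSpace Ω]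
    {μ : Measure Ω} [IsFiniteMeasure μ] [AddGroup G] [Countable G] [MeasurableSpace G]
    [MeasurableSingletonClass G] {X Y : Ω → G} (hXY : IndepFun X Y μ) (hX : Measurable X)
    (hY : Measurable Y) (k : G) :
    (μ {ω | X ω + Y ω = k}).toReal =
      ∑' j, (μ {ω | X ω = j}).toReal * (μ {ω | Y ω = -j + k}).toReal := by
  have hunion : {ω | X ω + Y ω = k} = ⋃ j, X ⁻¹' {j} ∩ Y ⁻¹' {-j + k} := by
    ext ω
    simp [eq_neg_add_iff_add_eq]
  have hdisj : Pairwise (Function.onFun Disjoint fun j ↦ X ⁻¹' {j} ∩ Y ⁻¹' {-j + k}) :=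
    fun i j hij ↦ Set.disjoint_left.mpr fun ω hi hj ↦ hij (hi.1.symm.trans hj.1)
  rw [hunion, measure_iUnion hdisj fun j ↦ (hX (.singleton j)).inter (hY (.singleton _)),
    ENNReal.tsum_toReal_eq fun j ↦ measure_ne_top μ _]
  congr 1 with j
  rw [hXY.measure_inter_preimage_eq_mul _ _ (.singleton _) (.singleton _), ENNReal.toReal_mul]
  rfl

lemma ccPmf_zero : ccPmf 0 = Pi.single 0 1 := by
  ext k
  simp [ccPmf, Pi.single_apply]

lemma cosh_mul_ccPmf {l : ℝ} (hl : l ≠ 0) (k : ℤ) :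
    cosh (l * π) * ccPmf l k = l * sinh (l * π) / (π * (l ^ 2 + (k : ℝ) ^ 2)) := by
  have hcosh := (cosh_pos (l * π)).ne'
  rw [ccPmf, if_neg hl, tanh_eq_sinh_div_cosh]
  field_simp

lemma summable_ccPmf (l : ℝ) : Summable (ccPmf l) := by
  rcases eq_or_ne l 0 with rfl | hl
  · rw [ccPmf_zero]
    exact (hasSum_pi_single 0 1).summable
  have hsq : Summable fun k : ℤ ↦ |l| / (k : ℝ) ^ 2 :=
    (summable_one_div_int_pow.mpr one_lt_two).mul_left |l| |>.congr fun k ↦ by ring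
  have hbound : ∀ᶠ k : ℤ in Filter.cofinite, ‖l / (l ^ 2 + (k : ℝ) ^ 2)‖ ≤ |l| / (k : ℝ) ^ 2 := by
    filter_upwards [Filter.eventually_cofinite_ne 0] with k hk
    rw [norm_div, Real.norm_eq_abs, Real.norm_of_nonneg (by positivity)]
    gcongr
    linarith [sq_nonneg l]
  refine ((hsq.of_norm_bounded_eventually hbound).mul_left (tanh (l * π) / π)).congr fun k ↦ ?_
  rw [ccPmf, if_neg hl]

instance : Fact (0 < 2 * π) := ⟨two_pi_pos⟩

noncomputable def periodicCosh (l : ℝ) : C(AddCircle (2 * π), ℂ) where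
  toFun := AddCircle.liftIco (2 * π) 0 fun t ↦ Complex.cosh (l * (π - t))
  continuous_toFun := AddCircle.liftIco_zero_continuous
    (by rw [← Complex.cosh_neg]; push_cast; ring_nf)
    (by fun_prop)

lemma periodicCosh_coe (l : ℝ) {t : ℝ} (ht : t ∈ Set.Ico 0 (0 + 2 * π)) :
    periodicCosh l t = Complex.cosh (l * (π - t)) :=
  AddCircle.liftIco_coe_apply (f := fun t : ℝ ↦ Complex.cosh (l * (π - t))) ht

lemma periodicCosh_zero : periodicCosh 0 = fourier 0 := by
  ext x
  induction x using QuotientAddGroup.induction_on with | H t => ?_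
  simp [periodicCosh, AddCircle.liftIco]

lemma periodicCosh_mul_periodicCosh (l₁ l₂ : ℝ) :
    periodicCosh l₁ * periodicCosh l₂ =
      (2⁻¹ : ℂ) • (periodicCosh (l₁ + l₂) + periodicCosh |l₂ - l₁|) := by
  ext x
  obtain ⟨t, ht, rfl⟩ : ∃ t ∈ Set.Ico 0 (0 + 2 * π), (t : AddCircle (2 * π)) = x :=
    let ⟨⟨t, ht⟩, h⟩ := (AddCircle.equivIco (2 * π) 0).symm.surjective x
    ⟨t, ht, h⟩
  simp only [ContinuousMap.mul_apply, ContinuousMap.smul_apply,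
    ContinuousMap.add_apply, periodicCosh_coe _ ht, smul_eq_mul]
  have habs : Complex.cosh (|l₂ - l₁| * (π - t)) = Complex.cosh ((l₂ - l₁) * (π - t)) := by
    rcases abs_cases (l₂ - l₁) with ⟨h, -⟩ | ⟨h, -⟩
    · rw [h]; push_cast; rfl
    · rw [h, ← Complex.cosh_neg]; push_cast; ring_nf
  rw [habs, Complex.ofReal_add, add_mul, sub_mul, Complex.cosh_add, Complex.cosh_sub]
  ring

lemma hasDerivAt_exp_mul_sinh_cosh (l n : ℂ) (t : ℝ) :
    HasDerivAt (fun t : ℝ ↦ Complex.exp (-(n * t) * Complex.I) *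
        (-l * Complex.sinh (l * (π - t)) + Complex.I * n * Complex.cosh (l * (π - t))))
      ((l ^ 2 + n ^ 2) * (Complex.exp (-(n * t) * Complex.I) * Complex.cosh (l * (π - t)))) t := by
  suffices ∀ z : ℂ, HasDerivAt (fun z : ℂ ↦ Complex.exp (-(n * z) * Complex.I) *
      (-l * Complex.sinh (l * (π - z)) + Complex.I * n * Complex.cosh (l * (π - z))))
      ((l ^ 2 + n ^ 2) * (Complex.exp (-(n * z) * Complex.I) * Complex.cosh (l * (π - z)))) z from
    (this t).comp_ofReal
  intro z
  have hlin : HasDerivAt (fun z : ℂ ↦ l * (π - z)) (-l) z := by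
    simpa using ((hasDerivAt_id z).const_sub (π : ℂ)).const_mul l
  have hphase : HasDerivAt (fun z : ℂ ↦ -(n * z) * Complex.I) (-n * Complex.I) z := by
    simpa using (((hasDerivAt_id z).const_mul n).neg).mul_const Complex.I
  refine ((Complex.hasDerivAt_exp _).comp z hphase |>.mul
    ((((Complex.hasDerivAt_sinh _).comp z hlin).const_mul (-l)).add
      (((Complex.hasDerivAt_cosh _).comp z hlin).const_mul (Complex.I * n)))).congr_deriv ?_
  simp only [Function.comp_apply, Pi.add_apply]
  linear_combination -Complex.exp (-(n * z) * Complex.I) * Complex.cosh (l * (π - z)) * n ^ 2 *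
    Complex.I_sq

lemma integral_exp_mul_cosh (l : ℝ) (n : ℤ) :
    ((l : ℂ) ^ 2 + (n : ℂ) ^ 2) *
        ∫ t in (0 : ℝ)..2 * π, Complex.exp (-(n * t) * Complex.I) * Complex.cosh (l * (π - t)) =
      2 * l * Complex.sinh (l * π) := by
  rw [← intervalIntegral.integral_const_mul, intervalIntegral.integral_eq_sub_of_hasDerivAt
    (fun t _ ↦ hasDerivAt_exp_mul_sinh_cosh l n t) (Continuous.intervalIntegrable (by fun_prop) _ _)]
  have hperiod : Complex.exp (-(n * (2 * π : ℝ)) * Complex.I) = 1 := by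
    rw [← Complex.exp_int_mul_two_pi_mul_I (-n)]
    push_cast
    ring_nf
  rw [hperiod]
  push_cast
  rw [show (l : ℂ) * (π - 2 * π) = -(l * π) by ring, Complex.sinh_neg, Complex.cosh_neg]
  simp only [mul_zero, neg_zero, zero_mul, Complex.exp_zero, sub_zero]
  ring

lemma fourierCoeff_periodicCosh (l : ℝ) (n : ℤ) :
    fourierCoeff (periodicCosh l) n = (cosh (l * π) * ccPmf l n : ℝ) := by
  rcases eq_or_ne l 0 with rfl | hl
  · rw [periodicCosh_zero, fourierCoeff_fourier, ccPmf_zero]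
    by_cases hn : n = 0 <;> simp [hn]
  have hfourier (t : ℝ) :
      fourier (-n) (t : AddCircle (0 + 2 * π - 0)) • Complex.cosh (l * (π - t)) =
        Complex.exp (-(n * t) * Complex.I) * Complex.cosh (l * (π - t)) := by
    rw [fourier_coe_apply, smul_eq_mul]
    congr 2
    field_simp
    push_cast
    ring
  have hden : (l : ℂ) ^ 2 + (n : ℂ) ^ 2 ≠ 0 := by
    exact_mod_cast (by positivity : l ^ 2 + (n : ℝ) ^ 2 ≠ 0)
  rw [periodicCosh, ContinuousMap.coe_mk, fourierCoeff_liftIco_eq, fourierCoeffOn_eq_integral]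
  simp_rw [hfourier, sub_zero, zero_add]
  rw [← mul_div_cancel_left₀ (∫ t in (0 : ℝ)..2 * π, _) hden, integral_exp_mul_cosh,
    cosh_mul_ccPmf hl, Complex.real_smul]
  push_cast
  field_simp

theorem hasSum_cosh_mul_ccPmf_mul_cosh_mul_ccPmf (l₁ l₂ : ℝ) (k : ℤ) :
    HasSum (fun j ↦ cosh (l₁ * π) * ccPmf l₁ j * (cosh (l₂ * π) * ccPmf l₂ (k - j)))
      ((cosh ((l₁ + l₂) * π) * ccPmf (l₁ + l₂) k +
        cosh (|l₂ - l₁| * π) * ccPmf |l₂ - l₁| k) / 2) := by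
  have hsummable : Summable (fourierCoeff (periodicCosh l₁)) := by
    rw [funext (fourierCoeff_periodicCosh l₁), Complex.summable_ofReal]
    exact (summable_ccPmf l₁).mul_left _
  have hconv := hasSum_fourierCoeff_mul_fourierCoeff _ (periodicCosh l₂) hsummable k
  rw [periodicCosh_mul_periodicCosh, ContinuousMap.coe_smul, ContinuousMap.coe_add,
    fourierCoeff.const_smul, fourierCoeff.add (periodicCosh _).integrable_haarAddCircle
      (periodicCosh _).integrable_haarAddCircle] at hconv
  simp only [Pi.add_apply, fourierCoeff_periodicCosh, smul_eq_mul] at hconv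
  refine Complex.hasSum_ofReal.mp ?_
  push_cast at hconv ⊢
  rwa [div_eq_inv_mul]

theorem hasSum_ccPmf_mul_ccPmf (l₁ l₂ : ℝ) (k : ℤ) :
    HasSum (fun j ↦ ccPmf l₁ j * ccPmf l₂ (k - j))
      ((cosh ((l₁ + l₂) * π) / (2 * cosh (l₁ * π) * cosh (l₂ * π))) * ccPmf (l₁ + l₂) k +
        (cosh (|l₂ - l₁| * π) / (2 * cosh (l₁ * π) * cosh (l₂ * π))) * ccPmf |l₂ - l₁| k) := by
  have hc₁ := (cosh_pos (l₁ * π)).ne'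
  have hc₂ := (cosh_pos (l₂ * π)).ne'
  have hnormalize := (hasSum_cosh_mul_ccPmf_mul_cosh_mul_ccPmf l₁ l₂ k).div_const
    (cosh (l₁ * π) * cosh (l₂ * π))
  rw [show ∀ a b : ℝ, (a + b) / 2 / (cosh (l₁ * π) * cosh (l₂ * π)) =
      a / (2 * cosh (l₁ * π) * cosh (l₂ * π)) + b / (2 * cosh (l₁ * π) * cosh (l₂ * π))
    from fun a b ↦ by field_simp] at hnormalize
  simpa only [mul_div_assoc, div_mul_eq_mul_div] using hnormalize.congr_fun fun j ↦ by field_simp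

theorem stmt_17_general {Ω : Type*} [MeasurableSpace Ω] (μ : Measure Ω) [IsProbabilityMeasure μ]
    (l₁ l₂ : ℝ)
    (X Y : Ω → ℤ) (hX : Measurable X) (hY : Measurable Y)
    (hindep : ProbabilityTheory.IndepFun X Y μ)
    (hXpmf : ∀ k : ℤ, (μ {ω | X ω = k}).toReal = ccPmf l₁ k)
    (hYpmf : ∀ k : ℤ, (μ {ω | Y ω = k}).toReal = ccPmf l₂ k)
    (k : ℤ) :
    (μ {ω | X ω + Y ω = k}).toReal =
      (Real.cosh ((l₁ + l₂) * π) / (2 * Real.cosh (l₁ * π) * Real.cosh (l₂ * π))) *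
          ccPmf (l₁ + l₂) k +
        (Real.cosh (|l₂ - l₁| * π) / (2 * Real.cosh (l₁ * π) * Real.cosh (l₂ * π))) *
          ccPmf |l₂ - l₁| k := by
  rw [hindep.toReal_measure_add_eq_tsum hX hY k]
  simp_rw [hXpmf, hYpmf, neg_add_eq_sub]
  exact (hasSum_ccPmf_mul_ccPmf l₁ l₂ k).tsum_eq

theorem stmt_17 {Ω : Type*} [MeasurableSpace Ω] (μ : Measure Ω) [IsProbabilityMeasure μ]
    (l₁ l₂ : ℝ) (hl₁ : 0 < l₁) (hl₂ : 0 < l₂)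
    (X Y : Ω → ℤ) (hX : Measurable X) (hY : Measurable Y)
    (hindep : ProbabilityTheory.IndepFun X Y μ)
    (hXpmf : ∀ k : ℤ, (μ {ω | X ω = k}).toReal = ccPmf l₁ k)
    (hYpmf : ∀ k : ℤ, (μ {ω | Y ω = k}).toReal = ccPmf l₂ k)
    (k : ℤ) :
    (μ {ω | X ω + Y ω = k}).toReal =
      (Real.cosh ((l₁ + l₂) * π) / (2 * Real.cosh (l₁ * π) * Real.cosh (l₂ * π))) *
          ccPmf (l₁ + l₂) k +
        (Real.cosh (|l₂ - l₁| * π) / (2 * Real.cosh (l₁ * π) * Real.cosh (l₂ * π))) *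
          ccPmf |l₂ - l₁| k :=
  stmt_17_general μ l₁ l₂ X Y hX hY hindep hXpmf hYpmf k
end
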